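/- (Metabelian BCH, following Gerritzen) In the free metabelian nilpotent-of-class-c Lie algebra L_{2,c} on generators x, y over a field of characteristic 0, the unique z with exp(ad z) = exp(ad x) ∘ exp(ad y) has the form z = x + y + [x,y]·c(ad x, ad y) for some power series c(t,u) ∈ ℚ[[t,u]] (truncated to degree ≤ c−2), whose low-order terms are c(t,u) = 1/2 − t/12 + u/12 − tu/24 + ⋯; in particular, modulo terms of total degree ≥ 4, z = x + y + [x,y]/2 − [x,y,x]/12 + [x,y,y]/12. -/

import Mathlib

/-- The right adjoint action `adr x : u ↦ ⁅u, x⁆`. -/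
noncomputable def adr (K : Type*) (L : Type*) [Field K] [LieRing L] [LieAlgebra K L]
    (x : L) : Module.End K L := -(LieAlgebra.ad K L x)

/-- The inner automorphism `exp(ad v) = ∑_{k=0}^{c-1} (ad v)^k/k!` for class `c = 4`. -/
noncomputable def expAd4 (K : Type*) (L : Type*) [Field K] [LieRing L] [LieAlgebra K L]
    (v : L) : L → L :=
  fun w => ∑ k ∈ Finset.range 4, (k.factorial : K)⁻¹ • (((adr K L v) ^ k) w)

/-! With `X = adr x`, `Y = adr y`, the right action turns `exp(ad x)` followed by `exp(ad y)`
into the product `e(Y) e(X)` in `End L`, where `e(A) = 1 + A + A²/2 + A³/6`, and `adr` reverses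
brackets, so the claim becomes the associative BCH identity `e(Y) e(X) = e(BCH(Y, X))` up to
degree 3. Nilpotency of class 4 makes every word of length 4 in `X, Y` vanish, and the degree ≤ 3
parts of both sides agree by direct expansion. -/

noncomputable def bch3 (K : Type*) {M : Type*} [Field K] [AddCommGroup M] [Module K M]
    [Bracket M M] (A B : M) : M :=
  A + B + (2 : K)⁻¹ • ⁅A, B⁆ + (12 : K)⁻¹ • ⁅A, ⁅A, B⁆⁆ - (12 : K)⁻¹ • ⁅B, ⁅A, B⁆⁆

section TruncatedExp

variable (K : Type*) {R : Type*} [Field K] [Ring R] [Algebra K R]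

noncomputable def truncExp4 (A : R) : R :=
  ∑ k ∈ Finset.range 4, (k.factorial : K)⁻¹ • A ^ k

theorem truncExp4_mul_truncExp4 [CharZero K] {S : Set R}
    (hS : ∀ a ∈ S, ∀ b ∈ S, ∀ c ∈ S, ∀ d ∈ S, a * b * c * d = 0) {A B : R} (hA : A ∈ S)
    (hB : B ∈ S) : truncExp4 K A * truncExp4 K B = truncExp4 K (bch3 K A B) := by
  have hword : ∀ a b c d, a ∈ S → b ∈ S → c ∈ S → d ∈ S → a * (b * (c * d)) = 0 :=
    fun a b c d ha hb hc hd => by rw [← mul_assoc, ← mul_assoc]; exact hS a ha b hb c hc d hd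
  -- simp rewrites bottom-up, so `hword` hits the length-4 tail of every longer word first.
  simp only [truncExp4, bch3, Finset.sum_range_succ, Finset.sum_range_zero, Nat.factorial,
    Ring.lie_def, pow_succ, pow_zero, mul_add, add_mul, mul_sub, sub_mul, smul_mul_assoc,
    mul_smul_comm, mul_assoc, one_mul, mul_one, smul_add, smul_sub, hA, hB, hword, mul_zero,
    smul_zero, add_zero, sub_zero, zero_add]
  match_scalars <;> field_simp <;> ring

end TruncatedExp

section Adjoint

variable {K : Type*} {L : Type*} [Field K] [LieRing L] [LieAlgebra K L]

@[simp]
lemma adr_apply (v w : L) : adr K L v w = ⁅w, v⁆ := by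
  rw [adr, LinearMap.neg_apply, LieAlgebra.ad_apply, ← lie_skew, neg_neg]

lemma adr_add (u v : L) : adr K L (u + v) = adr K L u + adr K L v := by
  ext w; simp

lemma adr_sub (u v : L) : adr K L (u - v) = adr K L u - adr K L v := by
  ext w; simp

lemma adr_smul (s : K) (v : L) : adr K L (s • v) = s • adr K L v := by
  ext w; simp

lemma adr_lie (u v : L) : adr K L ⁅u, v⁆ = ⁅adr K L v, adr K L u⁆ := by
  ext w
  simp only [Ring.lie_def, LinearMap.sub_apply, Module.End.mul_apply, adr_apply]
  rw [leibniz_lie w u v, ← lie_skew ⁅w, v⁆ u]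
  abel

lemma adr_bch3 (u v : L) : adr K L (bch3 K u v) = bch3 K (adr K L v) (adr K L u) := by
  simp only [bch3, adr_add, adr_sub, adr_smul, adr_lie, Ring.lie_def, mul_sub, sub_mul]
  module

lemma expAd4_apply (v w : L) : expAd4 K L v w = truncExp4 K (adr K L v) w := by
  rw [expAd4, truncExp4, LinearMap.sum_apply]
  rfl

lemma adr_apply_mem_lowerCentralSeries_succ {k : ℕ} {m : L}
    (hm : m ∈ LieModule.lowerCentralSeries K L L k) (a : L) :
    adr K L a m ∈ LieModule.lowerCentralSeries K L L (k + 1) := by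
  rw [adr_apply, ← lie_skew, LieModule.lowerCentralSeries_succ]
  exact neg_mem (LieSubmodule.lie_mem_lie (LieSubmodule.mem_top a) hm)

lemma adr_mul_adr_mul_adr_mul_adr (hnil : LieModule.lowerCentralSeries K L L 4 = ⊥)
    (a b c d : L) : adr K L a * adr K L b * adr K L c * adr K L d = 0 := by
  ext w
  have h0 : w ∈ LieModule.lowerCentralSeries K L L 0 := LieSubmodule.mem_top w
  have h := adr_apply_mem_lowerCentralSeries_succ (adr_apply_mem_lowerCentralSeries_succ
    (adr_apply_mem_lowerCentralSeries_succ (adr_apply_mem_lowerCentralSeries_succ h0 d) c) b) a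
  rw [hnil, LieSubmodule.mem_bot] at h
  exact h

end Adjoint

theorem metabelian_BCH_class_four_general
    (K : Type*) (L : Type*) [Field K] [CharZero K] [LieRing L] [LieAlgebra K L]
    (hnil : LieModule.lowerCentralSeries K L L 4 = ⊥)
    (x y : L) :
    ∀ w : L,
      expAd4 K L y (expAd4 K L x w) =
        expAd4 K L
          (x + y + (2 : K)⁻¹ • ⁅x, y⁆ - (12 : K)⁻¹ • ⁅⁅x, y⁆, x⁆ +
            (12 : K)⁻¹ • ⁅⁅x, y⁆, y⁆) w := by
  intro w
  have hz : x + y + (2 : K)⁻¹ • ⁅x, y⁆ - (12 : K)⁻¹ • ⁅⁅x, y⁆, x⁆ + (12 : K)⁻¹ • ⁅⁅x, y⁆, y⁆ =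
      bch3 K x y := by
    rw [bch3, ← lie_skew ⁅x, y⁆ x, ← lie_skew ⁅x, y⁆ y]
    module
  have hS : ∀ a ∈ Set.range (adr K L), ∀ b ∈ Set.range (adr K L), ∀ c ∈ Set.range (adr K L),
      ∀ d ∈ Set.range (adr K L), a * b * c * d = 0 := by
    rintro _ ⟨a, rfl⟩ _ ⟨b, rfl⟩ _ ⟨c, rfl⟩ _ ⟨d, rfl⟩
    exact adr_mul_adr_mul_adr_mul_adr hnil a b c d
  rw [hz, expAd4_apply, expAd4_apply, expAd4_apply, adr_bch3,
    ← truncExp4_mul_truncExp4 K hS ⟨y, rfl⟩ ⟨x, rfl⟩, Module.End.mul_apply]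

/-- Metabelian Baker–Campbell–Hausdorff formula (after Gerritzen) in a metabelian Lie
algebra that is nilpotent of class `4` (as is the free metabelian algebra `L_{2,4}` on
`x, y`): `exp(ad x) ∘ exp(ad y) = exp(ad z)` for
`z = x + y + [x,y]/2 − [x,y,x]/12 + [x,y,y]/12`,
i.e. `z` agrees with the BCH series `x + y + [x,y]·c(ad x, ad y)`,
`c(t,u) = 1/2 − t/12 + u/12 − tu/24 + ⋯`, modulo terms of total degree ≥ 4
(which act trivially). Here the automorphisms act on the right, so the composition
`exp(ad x) ∘ exp(ad y)` sends `w` to `(w·exp(ad x))·exp(ad y)`. -/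
theorem metabelian_BCH_class_four
    (K : Type*) (L : Type*) [Field K] [CharZero K] [LieRing L] [LieAlgebra K L]
    (hmet : ∀ a b c d : L, ⁅⁅a, b⁆, ⁅c, d⁆⁆ = 0)
    (hnil : LieModule.lowerCentralSeries K L L 4 = ⊥)
    (x y : L) :
    ∀ w : L,
      expAd4 K L y (expAd4 K L x w) =
        expAd4 K L
          (x + y + (2 : K)⁻¹ • ⁅x, y⁆ - (12 : K)⁻¹ • ⁅⁅x, y⁆, x⁆ +
            (12 : K)⁻¹ • ⁅⁅x, y⁆, y⁆) w :=
  metabelian_BCH_class_four_general K L hnil x y
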